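/- Let a ≥ 0 and let x, y : ℕ → ℝ satisfy 0 ≤ x_m ≤ a^m and 0 ≤ y_n ≤ a^n for all m, n ∈ ℕ. Then Σ ((m̃+ñ)!/(m! n! m̃! ñ!)) x_{m−1} y_n ≤ 2 e^{4a}, where the sum runs over all (m, n, m̃, ñ) ∈ ℕ⁴ with m ≥ 1 and m + n = m̃ + ñ (in particular the family is summable). -/

import Mathlib

/-- The summand of Lemma D.5, shifted-index case: for a quadruple `(m, n, m̃, ñ)`,
`((m̃+ñ)! / (m! n! m̃! ñ!)) * x (m-1) * y n`. -/
noncomputable def summandD5shift (x y : ℕ → ℝ) (q : ℕ × ℕ × ℕ × ℕ) : ℝ :=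
  ((q.2.2.1 + q.2.2.2).factorial : ℝ) /
    ((q.1.factorial : ℝ) * (q.2.1.factorial : ℝ) * (q.2.2.1.factorial : ℝ) *
      (q.2.2.2.factorial : ℝ)) * x (q.1 - 1) * y q.2.1

/-!
Fix `m' = m - 1` and `n`; then `m̃` ranges over `0, …, N` with `N = m' + n + 1` and `ñ = N - m̃`,
so by the binomial theorem the inner sum is
`x_{m'} y_n / ((m'+1)! n!) · ∑ N!/(m̃! ñ!) = x_{m'} y_n 2^N / ((m'+1)! n!)`,
which is at most `2 · (2a)^{m'}/m'! · (2a)^n/n!`.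
The outer sum is then bounded by twice the product of two exponential series, `2 e^{2a} e^{2a}`.
-/

open Nat

theorem summable_and_tsum_sigma_le_of_sum_fiber_le {α : Type*} {β : α → Type*}
    [∀ i, Fintype (β i)] {f : (Σ i, β i) → ℝ} (hf : ∀ s, 0 ≤ f s) {g : α → ℝ}
    (hg : Summable g) (hfg : ∀ i, ∑ j, f ⟨i, j⟩ ≤ g i) :
    Summable f ∧ ∑' s, f s ≤ ∑' i, g i := by
  replace hfg (i : α) : ∑' j, f ⟨i, j⟩ ≤ g i := (tsum_fintype _).trans_le (hfg i)
  have hfiber : Summable fun i => ∑' j, f ⟨i, j⟩ :=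
    hg.of_nonneg_of_le (fun _ => tsum_nonneg fun _ => hf _) hfg
  have hsum : Summable f :=
    (summable_sigma_of_nonneg hf).2 ⟨fun _ => Summable.of_finite, hfiber⟩
  exact ⟨hsum, hsum.tsum_sigma ▸ hfiber.tsum_le_tsum hfg hg⟩

theorem hasSum_pow_div_factorial_mul_pow_div_factorial (b c : ℝ) :
    HasSum (fun p : ℕ × ℕ => b ^ p.1 / p.1 ! * (c ^ p.2 / p.2 !)) (Real.exp (b + c)) := by
  have hexp (z : ℝ) : HasSum (fun n => z ^ n / n !) (Real.exp z) :=
    Real.exp_eq_exp_ℝ ▸ NormedSpace.expSeries_div_hasSum_exp z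
  have hb : Summable fun n => ‖b ^ n / (n ! : ℝ)‖ := NormedSpace.norm_expSeries_div_summable b
  have hc : Summable fun n => ‖c ^ n / (n ! : ℝ)‖ := NormedSpace.norm_expSeries_div_summable c
  have hbc := (hexp b).mul (hexp c) (summable_mul_of_summable_norm hb hc)
  rwa [← Real.exp_add] at hbc

/-- `(m, n, m̃, ñ) ↦ ⟨(m - 1, n), m̃⟩`, with `ñ` recovered from `m + n = m̃ + ñ`. -/
def indexEquivD5shift : {q : ℕ × ℕ × ℕ × ℕ // 1 ≤ q.1 ∧ q.1 + q.2.1 = q.2.2.1 + q.2.2.2} ≃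
    Σ p : ℕ × ℕ, Fin (p.1 + p.2 + 2) where
  toFun q := ⟨(q.1.1 - 1, q.1.2.1), ⟨q.1.2.2.1, by omega⟩⟩
  invFun s := ⟨(s.1.1 + 1, s.1.2, s.2, s.1.1 + 1 + s.1.2 - s.2), by dsimp only; omega⟩
  left_inv := by
    rintro ⟨⟨m, n, m', n'⟩, h1, h2⟩
    ext <;> dsimp only at h1 h2 ⊢ <;> omega
  right_inv _ := rfl

theorem summandD5shift_nonneg {x y : ℕ → ℝ} (hx0 : ∀ m, 0 ≤ x m) (hy0 : ∀ n, 0 ≤ y n)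
    (q : ℕ × ℕ × ℕ × ℕ) : 0 ≤ summandD5shift x y q :=
  mul_nonneg (mul_nonneg (by positivity) (hx0 _)) (hy0 _)

theorem summandD5shift_eq_choose (x y : ℕ → ℝ) {m n k : ℕ} (hk : k ≤ m + n + 1) :
    summandD5shift x y (m + 1, n, k, m + 1 + n - k) =
      (m + n + 1).choose k * (x m * y n / ((m + 1)! * n !)) := by
  have hN : m + 1 + n - k = m + n + 1 - k := by omega
  simp only [summandD5shift, add_tsub_cancel_right, hN, Nat.add_sub_cancel' hk,
    Nat.cast_choose ℝ hk]
  field_simp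

theorem sum_summandD5shift_fiber (x y : ℕ → ℝ) (m n : ℕ) :
    ∑ k : Fin (m + n + 2), summandD5shift x y (m + 1, n, k, m + 1 + n - k) =
      2 ^ (m + n + 1) * (x m * y n / ((m + 1)! * n !)) := by
  rw [Fin.sum_univ_eq_sum_range (fun k => summandD5shift x y (m + 1, n, k, m + 1 + n - k)),
    Finset.sum_congr rfl fun k hk =>
      summandD5shift_eq_choose x y (Finset.mem_range_succ_iff.1 hk),
    ← Finset.sum_mul]
  congr 1
  exact_mod_cast Nat.sum_range_choose (m + n + 1)

theorem two_pow_mul_div_factorial_le {a : ℝ} (ha : 0 ≤ a) {x y : ℕ → ℝ}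
    (hxa : ∀ m, x m ≤ a ^ m) (hy0 : ∀ n, 0 ≤ y n) (hya : ∀ n, y n ≤ a ^ n) (m n : ℕ) :
    2 ^ (m + n + 1) * (x m * y n / ((m + 1)! * n !)) ≤
      2 * ((2 * a) ^ m / m ! * ((2 * a) ^ n / n !)) := by
  have hfac : (m ! : ℝ) ≤ (m + 1)! := mod_cast Nat.factorial_le m.le_succ
  calc 2 ^ (m + n + 1) * (x m * y n / ((m + 1)! * n !))
      ≤ 2 ^ (m + n + 1) * (a ^ m * a ^ n / (m ! * n !)) := by
        gcongr
        exacts [hy0 n, hxa m, hya n]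
    _ = 2 * ((2 * a) ^ m / m ! * ((2 * a) ^ n / n !)) := by
        rw [mul_pow, mul_pow, pow_succ, pow_add]
        field_simp

theorem summation_lemma_shift (a : ℝ) (x y : ℕ → ℝ)
    (hx0 : ∀ m, 0 ≤ x m) (hxa : ∀ m, x m ≤ a ^ m)
    (hy0 : ∀ n, 0 ≤ y n) (hya : ∀ n, y n ≤ a ^ n) :
    Summable (fun q : {q : ℕ × ℕ × ℕ × ℕ //
        1 ≤ q.1 ∧ q.1 + q.2.1 = q.2.2.1 + q.2.2.2} => summandD5shift x y q.1) ∧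
    ∑' q : {q : ℕ × ℕ × ℕ × ℕ // 1 ≤ q.1 ∧ q.1 + q.2.1 = q.2.2.1 + q.2.2.2},
      summandD5shift x y q.1 ≤ 2 * Real.exp (4 * a) := by
  have ha : 0 ≤ a := (hx0 1).trans ((hxa 1).trans_eq (pow_one a))
  have hexp := (hasSum_pow_div_factorial_mul_pow_div_factorial (2 * a) (2 * a)).mul_left 2
  rw [show 2 * a + 2 * a = 4 * a by ring] at hexp
  rw [← indexEquivD5shift.symm.summable_iff, ← indexEquivD5shift.symm.tsum_eq, ← hexp.tsum_eq]
  refine summable_and_tsum_sigma_le_of_sum_fiber_le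
    (fun _ => summandD5shift_nonneg hx0 hy0 _) hexp.summable fun ⟨m, n⟩ => ?_
  exact (sum_summandD5shift_fiber x y m n).trans_le
    (two_pow_mul_div_factorial_le ha hxa hy0 hya m n)
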